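/- Define V₁(r,s,t) = (s, t, r, 0, 0, r) and V₂(u,v,w) = (1 − 2uw + vw², w(1 − uw + vw²), u − vw, −vw², v, u + vw), maps into ℝ⁶. Then { V₁(r,s,t) : r ≠ 0, s,t ∈ ℝ } ∩ { V₂(u,v,w) : u ≠ 0, v,w ∈ ℝ } = { (1 − 2uw, w(1 − uw), u, 0, 0, u) : u ≠ 0, w ∈ ℝ } = { V₂(u,0,w) : u ≠ 0, w ∈ ℝ }; in particular the two 3-parameter families intersect along a 2-parameter family. -/

import Mathlib

/-! The fifth coordinate `Γ₂₂¹` vanishes on all of `𝒟₁` and equals `v` on `𝒟₂`, so the two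
families can only meet along `v = 0`, where `V₂` already has the shape of `V₁`. -/

/-- The space of Type B models: `(a,b,c,d,e,f)` records the Christoffel symbols
`Γᵢⱼᵏ = Aᵢⱼᵏ / x¹`. -/
abbrev R6 : Type := ℝ × ℝ × ℝ × ℝ × ℝ × ℝ

def V1 : ℝ → ℝ → ℝ → R6 := fun r s t => (s, t, r, 0, 0, r)

def V2 : ℝ → ℝ → ℝ → R6 := fun u v w =>
  (1 - 2*u*w + v*w^2, w*(1 - u*w + v*w^2), u - v*w, -v*w^2, v, u + v*w)

theorem V2_zero_eq (u w : ℝ) : V2 u 0 w = (1 - 2*u*w, w*(1 - u*w), u, 0, 0, u) := by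
  simp [V2]

theorem V2_zero_eq_V1 (u w : ℝ) : V2 u 0 w = V1 u (1 - 2*u*w) (w*(1 - u*w)) := by
  rw [V2_zero_eq, V1]

theorem eq_zero_of_V1_eq_V2 {r s t u v w : ℝ} (h : V1 r s t = V2 u v w) : v = 0 :=
  (congrArg (fun x : R6 => x.2.2.2.2.1) h).symm

theorem stmt_19 :
    {x : R6 | ∃ r s t : ℝ, r ≠ 0 ∧ x = V1 r s t} ∩
        {x : R6 | ∃ u v w : ℝ, u ≠ 0 ∧ x = V2 u v w} =
      {x : R6 | ∃ u w : ℝ, u ≠ 0 ∧ x = (1 - 2*u*w, w*(1 - u*w), u, 0, 0, u)} ∧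
    {x : R6 | ∃ u w : ℝ, u ≠ 0 ∧ x = (1 - 2*u*w, w*(1 - u*w), u, 0, 0, u)} =
      {x : R6 | ∃ u w : ℝ, u ≠ 0 ∧ x = V2 u 0 w} := by
  have h_V2_zero :
      {x : R6 | ∃ u w : ℝ, u ≠ 0 ∧ x = (1 - 2*u*w, w*(1 - u*w), u, 0, 0, u)} =
        {x : R6 | ∃ u w : ℝ, u ≠ 0 ∧ x = V2 u 0 w} := by
    simp only [V2_zero_eq]
  refine ⟨?_, h_V2_zero⟩
  rw [h_V2_zero]
  ext x
  constructor
  · rintro ⟨⟨r, s, t, -, rfl⟩, u, v, w, hu, h⟩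
    obtain rfl := eq_zero_of_V1_eq_V2 h
    exact ⟨u, w, hu, h⟩
  · rintro ⟨u, w, hu, rfl⟩
    exact ⟨⟨u, _, _, hu, V2_zero_eq_V1 u w⟩, u, 0, w, hu, rfl⟩
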